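/- With the notation of Lemma 1, if s(b₂, λ₃) = 0 then the minimizer of l(θ) = (1/2)‖θ − b‖² + λ₁‖θ‖₂ + λ₂‖θ‖₂² + λ₃|θ₂| satisfies θ₂ = 0 and θ₁ = (1/(1+2λ₂))·s(b₁, λ₁), i.e., when the soft-thresholded predictive component vanishes, the prognostic component reduces to a scaled soft-thresholding of b₁. -/

import Mathlib

/-!
Write `l(θ) = ½‖θ - b‖² + λ₂‖θ‖² + h(θ)` with `h(θ) = λ₁‖θ‖ + λ₃|θ₂|` convex. The quadratic part
is `(½ + λ₂)`-strongly convex, so at any `θ*` where `b - (1 + 2λ₂)θ*` is a subgradient of `h` we get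
`l(θ) ≥ l(θ*) + (½ + λ₂)‖θ - θ*‖²`, and `θ*` is the unique minimizer. For
`θ* = (s(b₁, λ₁)/(1 + 2λ₂), 0)` that vector is `(b₁ - s(b₁, λ₁), b₂)`, a subgradient because
`|b₁ - s(b₁, λ₁)| ≤ λ₁` with `(b₁ - s(b₁, λ₁)) s(b₁, λ₁) = λ₁|s(b₁, λ₁)|`, and `|b₂| ≤ λ₃` exactly
when `s(b₂, λ₃) = 0`.
-/

open scoped RealInnerProductSpace

noncomputable def softThreshold (x l : ℝ) : ℝ := Real.sign x * max (|x| - l) 0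

section SoftThreshold

variable {x l : ℝ}

lemma abs_le_of_softThreshold_eq_zero (hl : 0 ≤ l) (h : softThreshold x l = 0) : |x| ≤ l := by
  rcases eq_or_ne x 0 with rfl | hx
  · simpa using hl
  · have hmax := (mul_eq_zero.mp h).resolve_left (mt Real.sign_eq_zero_iff.mp hx)
    simpa using hmax

lemma abs_sub_softThreshold_le (hl : 0 ≤ l) : |x - softThreshold x l| ≤ l := by
  unfold softThreshold
  rcases lt_trichotomy x 0 with hx | rfl | hx
  · rw [Real.sign_of_neg hx, abs_of_neg hx]
    rcases le_total (-x - l) 0 with h | h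
    · rw [max_eq_right h, mul_zero, sub_zero, abs_of_neg hx]; linarith
    · rw [max_eq_left h, abs_le]; constructor <;> linarith
  · simpa using hl
  · rw [Real.sign_of_pos hx, abs_of_pos hx]
    rcases le_total (x - l) 0 with h | h
    · rw [max_eq_right h, mul_zero, sub_zero, abs_of_pos hx]; linarith
    · rw [max_eq_left h, abs_le]; constructor <;> linarith

lemma sub_softThreshold_mul_softThreshold :
    (x - softThreshold x l) * softThreshold x l = l * |softThreshold x l| := by
  unfold softThreshold
  rcases lt_trichotomy x 0 with hx | rfl | hx
  · rw [Real.sign_of_neg hx, abs_of_neg hx]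
    rcases le_total (-x - l) 0 with h | h
    · simp [max_eq_right h]
    · rw [max_eq_left h, abs_of_nonpos (by linarith)]; ring
  · simp
  · rw [Real.sign_of_pos hx, abs_of_pos hx]
    rcases le_total (x - l) 0 with h | h
    · simp [max_eq_right h]
    · rw [max_eq_left h, abs_of_nonneg (by linarith)]; ring

end SoftThreshold

section ProxObjective

variable {E : Type*} [NormedAddCommGroup E] [InnerProductSpace ℝ E]

noncomputable def proxObjective (b : E) (μ : ℝ) (h : E → ℝ) (t : E) : ℝ :=
  (1 / 2) * ‖t - b‖ ^ 2 + μ * ‖t‖ ^ 2 + h t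

variable {b θ : E} {μ : ℝ} {h : E → ℝ}

lemma proxObjective_add_sq_norm_sub_le (hθ : ∀ t, h θ + ⟪b - (1 + 2 * μ) • θ, t - θ⟫ ≤ h t)
    (t : E) :
    proxObjective b μ h θ + (1 / 2 + μ) * ‖t - θ‖ ^ 2 ≤ proxObjective b μ h t := by
  have hsmooth : ‖t - b‖ ^ 2 = ‖(t - θ) + (θ - b)‖ ^ 2 := by rw [sub_add_sub_cancel]
  have hsq : ‖t‖ ^ 2 = ‖(t - θ) + θ‖ ^ 2 := by rw [sub_add_cancel]
  have hinner : ⟪b - (1 + 2 * μ) • θ, t - θ⟫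
      = ⟪t - θ, b⟫ - (1 + 2 * μ) * ⟪t - θ, θ⟫ := by
    rw [inner_sub_left, real_inner_smul_left, real_inner_comm b, real_inner_comm θ]
  have hsub := hθ t
  rw [hinner] at hsub
  rw [proxObjective, proxObjective, hsmooth, hsq, norm_add_sq_real, norm_add_sq_real,
    inner_sub_right]
  linarith

lemma eq_of_proxObjective_le (hμ : -(1 / 2) < μ)
    (hθ : ∀ t, h θ + ⟪b - (1 + 2 * μ) • θ, t - θ⟫ ≤ h t) {θ' : E}
    (hθ' : proxObjective b μ h θ' ≤ proxObjective b μ h θ) : θ' = θ := by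
  have hgrowth := proxObjective_add_sq_norm_sub_le hθ θ'
  have : ‖θ' - θ‖ ^ 2 ≤ 0 := by nlinarith [sq_nonneg ‖θ' - θ‖]
  simpa [sub_eq_zero] using this

end ProxObjective

section GroupLasso

lemma mul_le_mul_abs_of_abs_le {a l x : ℝ} (ha : |a| ≤ l) : a * x ≤ l * |x| :=
  (le_abs_self _).trans <| (abs_mul a x).trans_le <| mul_le_mul_of_nonneg_right ha (abs_nonneg x)

/-- The objective `l` of Lemma 1; the paper's `θ₁, θ₂` are the coordinates `t 0, t 1`. -/
noncomputable def groupLassoObjective (b₁ b₂ l1 l2 l3 : ℝ) : EuclideanSpace ℝ (Fin 2) → ℝ :=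
  proxObjective !₂[b₁, b₂] l2 fun t ↦ l1 * ‖t‖ + l3 * |t 1|

lemma groupLassoObjective_apply (b₁ b₂ l1 l2 l3 t₁ t₂ : ℝ) :
    groupLassoObjective b₁ b₂ l1 l2 l3 !₂[t₁, t₂]
      = (1/2) * ((t₁ - b₁)^2 + (t₂ - b₂)^2) + l1 * Real.sqrt (t₁^2 + t₂^2)
          + l2 * (t₁^2 + t₂^2) + l3 * |t₂| := by
  simp only [groupLassoObjective, proxObjective, EuclideanSpace.norm_eq, Fin.sum_univ_two,
    ← WithLp.toLp_sub]
  simp [Real.sq_sqrt, add_nonneg, sq_nonneg]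
  ring

/-- `!₂[d, b₂]` is a subgradient of `t ↦ l1 ‖t‖ + l3 |t₂|` at `!₂[c, 0]`. -/
lemma groupLasso_subgradient {l1 l3 b₂ c d : ℝ} (hd : |d| ≤ l1) (hdc : d * c = l1 * |c|)
    (hb₂ : |b₂| ≤ l3) (t : EuclideanSpace ℝ (Fin 2)) :
    l1 * ‖!₂[c, 0]‖ + l3 * |(!₂[c, (0 : ℝ)] : EuclideanSpace ℝ (Fin 2)) 1|
        + ⟪!₂[d, b₂], t - !₂[c, 0]⟫ ≤ l1 * ‖t‖ + l3 * |t 1| := by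
  have hc : ‖(!₂[c, 0] : EuclideanSpace ℝ (Fin 2))‖ = |c| := by
    simp [EuclideanSpace.norm_eq, Real.sqrt_sq_eq_abs]
  have hinner : ⟪(!₂[d, b₂] : EuclideanSpace ℝ (Fin 2)), t - !₂[c, 0]⟫
      = d * t 0 - d * c + b₂ * t 1 := by
    simp [PiLp.inner_apply, Fin.sum_univ_two]
    ring
  have hnorm : l1 * |t 0| ≤ l1 * ‖t‖ :=
    mul_le_mul_of_nonneg_left (PiLp.norm_apply_le t 0) ((abs_nonneg d).trans hd)
  simp only [hc, hinner, Matrix.cons_val_one, Matrix.cons_val_zero, abs_zero,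
    mul_zero, add_zero]
  linarith [mul_le_mul_abs_of_abs_le (x := t 0) hd, mul_le_mul_abs_of_abs_le (x := t 1) hb₂]

lemma eq_of_groupLassoObjective_le {b₁ b₂ l1 l2 l3 : ℝ} (hl1 : 0 ≤ l1) (hl2 : -(1 / 2) < l2)
    (hb₂ : |b₂| ≤ l3) {θ : EuclideanSpace ℝ (Fin 2)}
    (hθ : groupLassoObjective b₁ b₂ l1 l2 l3 θ
      ≤ groupLassoObjective b₁ b₂ l1 l2 l3 !₂[(1 / (1 + 2 * l2)) * softThreshold b₁ l1, 0]) :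
    θ = !₂[(1 / (1 + 2 * l2)) * softThreshold b₁ l1, 0] := by
  set s := softThreshold b₁ l1
  have hpos : 0 < 1 + 2 * l2 := by linarith
  have hk : 0 < 1 / (1 + 2 * l2) := one_div_pos.mpr hpos
  have hgrad : !₂[b₁, b₂] - (1 + 2 * l2) • !₂[(1 / (1 + 2 * l2)) * s, 0] = !₂[b₁ - s, b₂] := by
    ext i
    fin_cases i
    · simp [mul_inv_cancel_left₀ hpos.ne']
    · simp
  have hdc : (b₁ - s) * ((1 / (1 + 2 * l2)) * s) = l1 * |(1 / (1 + 2 * l2)) * s| := by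
    rw [abs_mul, abs_of_pos hk, mul_left_comm, sub_softThreshold_mul_softThreshold]
    ring
  refine eq_of_proxObjective_le hl2 (fun t ↦ ?_) hθ
  rw [hgrad]
  exact groupLasso_subgradient (abs_sub_softThreshold_le hl1) hdc hb₂ t

end GroupLasso

/-- If the soft-thresholded predictive component vanishes, the minimizer of the
Lemma 1 objective has `θ₂ = 0` and `θ₁` is a scaled soft-thresholding of `b₁`. -/
theorem vanishing_predictive_component (b₁ b₂ lam1 lam2 lam3 θ₁ θ₂ : ℝ)
    (h1 : 0 < lam1) (h2 : 0 < lam2) (h3 : 0 < lam3)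
    (hs : Real.sign b₂ * max (|b₂| - lam3) 0 = 0)
    (hmin : ∀ t₁ t₂ : ℝ,
      (1/2) * ((θ₁ - b₁)^2 + (θ₂ - b₂)^2) + lam1 * Real.sqrt (θ₁^2 + θ₂^2)
          + lam2 * (θ₁^2 + θ₂^2) + lam3 * |θ₂|
        ≤ (1/2) * ((t₁ - b₁)^2 + (t₂ - b₂)^2) + lam1 * Real.sqrt (t₁^2 + t₂^2)
          + lam2 * (t₁^2 + t₂^2) + lam3 * |t₂|) :
    θ₂ = 0 ∧ θ₁ = (1/(1+2*lam2)) * (Real.sign b₁ * max (|b₁| - lam1) 0) := by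
  set c := (1 / (1 + 2 * lam2)) * softThreshold b₁ lam1
  have hb₂ : |b₂| ≤ lam3 := abs_le_of_softThreshold_eq_zero h3.le hs
  have hθ : (!₂[θ₁, θ₂] : EuclideanSpace ℝ (Fin 2)) = !₂[c, 0] := by
    refine eq_of_groupLassoObjective_le h1.le (by linarith) hb₂ ?_
    simpa only [groupLassoObjective_apply] using hmin c 0
  exact ⟨congrArg (· 1) hθ, congrArg (· 0) hθ⟩
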